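/- Let b, c be nonnegative integers with c ≤ b and b odd. Then Δ'(-b/2; b, c) = (-1)^{c(b-c)} · 2^c · ∏_{i=1}^{b-c} (i - b/2)_c/(i)_c. -/

import Mathlib

open Finset

/-- Generalized binomial coefficient `C(x,k)`. -/
def gbinom (x : ℚ) (k : ℤ) : ℚ :=
  if 0 ≤ k then (∏ m ∈ Finset.range k.toNat, (x - m)) / (k.toNat.factorial : ℚ) else 0

/-- Shifted factorial `(a)_k` with integer index. -/
def poch (a : ℚ) (k : ℤ) : ℚ :=
  if 0 ≤ k then ∏ m ∈ Finset.range k.toNat, (a + m)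
  else 1 / ∏ m ∈ Finset.range (-k).toNat, (a - (m + 1))

/-- The matrix `M(x;b,c)`. -/
def Mmat (x : ℚ) (b c : ℕ) : Matrix (Fin (b + c)) (Fin (b + c)) ℚ := fun i j =>
  if (i : ℕ) < c then
    (if (j : ℕ) < b then gbinom (x + (j : ℕ)) ((i : ℕ) : ℤ)
     else gbinom (2 * x + (j : ℕ)) ((i : ℕ) : ℤ))
  else if (i : ℕ) < b then
    (if (j : ℕ) < c then 0
     else if (j : ℕ) < b then gbinom (x + (j : ℕ)) ((i : ℕ) : ℤ)
     else gbinom (2 * x + (j : ℕ)) ((i : ℕ) : ℤ))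
  else
    (if (j : ℕ) < c then 2 * gbinom (x + (j : ℕ)) (((i : ℕ) : ℤ) - (b : ℤ))
     else if (j : ℕ) < b then gbinom (x + (j : ℕ)) (((i : ℕ) : ℤ) - (b : ℤ))
     else 0)

/-- `Δ(x;b,c)`. -/
def Δdet (x : ℚ) (b c : ℕ) : ℚ := (Mmat x b c).det

/-- The matrix `M'(x;b,c)`; column index `j` of the paper is `c + j'`. -/
def M'mat (x : ℚ) (b c : ℕ) : Matrix (Fin b) (Fin b) ℚ := fun i j =>
  if c + (j : ℕ) < b then
    gbinom (x + (c : ℕ)) (((i : ℕ) : ℤ) - ((c : ℤ) + (j : ℕ)) + (c : ℤ))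
  else if (i : ℕ) < c then
    2 * gbinom (2 * x + (b : ℕ)) (((i : ℕ) : ℤ) - ((c : ℤ) + (j : ℕ)) + (b : ℤ))
  else
    gbinom (2 * x + (b : ℕ)) (((i : ℕ) : ℤ) - ((c : ℤ) + (j : ℕ)) + (b : ℤ))

/-- `Δ'(x;b,c)`. -/
def Δ'det (x : ℚ) (b c : ℕ) : ℚ := (M'mat x b c).det

/-!
At `x = -b/2` we have `2x + b = 0`, so `C(2x + b, k) = [k = 0]` and the last `c` columns of `M'`
are `2e_0, …, 2e_{c-1}`. Rotating them to the front, a permutation of sign `(-1)^{c(b-c)}`, makes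
`M'` block upper triangular with diagonal blocks `2I_c` and the Toeplitz matrix
`T = (C(x + c, c + i - j))_{i,j < b-c}`. By Chu–Vandermonde, `T` times the unitriangular Pascal
matrix `(C(j, u))` is `(C(x + c + j, c + i))`, and pulling `1/(c+i)!` out of the rows and
`(x + j + 1)_c` out of the columns leaves a Vandermonde determinant in the nodes `x + c + j`,
equal to `∏_{j < b-c} j!`.
-/

open Matrix Polynomial Equiv
open scoped Nat

lemma gbinom_of_neg (x : ℚ) {k : ℤ} (hk : k < 0) : gbinom x k = 0 := if_neg hk.not_ge

lemma gbinom_natCast (x : ℚ) (k : ℕ) : gbinom x k = (∏ m ∈ range k, (x - m)) / k ! := by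
  simp [gbinom]

lemma gbinom_natCast_eq_choose (x : ℚ) (k : ℕ) : gbinom x k = Ring.choose x k := by
  rw [gbinom_natCast, div_eq_iff (by positivity), mul_comm, ← nsmul_eq_mul,
    ← Ring.descPochhammer_eq_factorial_smul_choose, ← aeval_eq_smeval, aeval_def,
    eval₂_eq_eval_map, descPochhammer_map, descPochhammer_eval_eq_prod_range]

lemma gbinom_zero_left (k : ℤ) : gbinom 0 k = if k = 0 then 1 else 0 := by
  obtain hk | ⟨k, rfl⟩ := lt_or_ge k 0 |>.imp id Int.eq_ofNat_of_zero_le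
  · rw [gbinom_of_neg _ hk, if_neg hk.ne]
  · rcases k with _ | k
    · simp [gbinom]
    · rw [gbinom_natCast, prod_range_succ', if_neg (by omega)]
      simp

lemma gbinom_add_natCast (x : ℚ) (K : ℕ) {j n : ℕ} (hj : j < n) :
    gbinom (x + j) K = ∑ u ∈ range n, gbinom x (K - u) * j.choose u := by
  have hvanish : ∀ N, n ≤ N → ∑ u ∈ range N, gbinom x (K - u) * j.choose u =
      ∑ u ∈ range n, gbinom x (K - u) * j.choose u := fun N hN =>
    eventually_constant_sum (fun u hu => by rw [Nat.choose_eq_zero_of_lt (by omega)]; simp) hN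
  rw [← hvanish (K + 1 + n) (by omega), eventually_constant_sum (N := K + 1)
      (fun u hu => by rw [gbinom_of_neg _ (by omega), zero_mul]) (by omega),
    gbinom_natCast_eq_choose, add_comm, Ring.add_choose_eq _ (Commute.all _ _),
    Nat.sum_antidiagonal_eq_sum_range_succ (fun a b => Ring.choose (j : ℚ) a * Ring.choose x b)]
  refine sum_congr rfl fun u hu => ?_
  have huK := mem_range.1 hu
  rw [Ring.choose_natCast, mul_comm, show (K : ℤ) - u = (K - u : ℕ) by omega,
    gbinom_natCast_eq_choose]

def pascalUpper (n : ℕ) : Matrix (Fin n) (Fin n) ℚ := of fun u j => ((j : ℕ).choose u : ℚ)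

lemma det_pascalUpper (n : ℕ) : (pascalUpper n).det = 1 := by
  rw [det_of_isUpperTriangular fun j u (h : u < j) => by
    simp [pascalUpper, Nat.choose_eq_zero_of_lt (show (u : ℕ) < j from h)]]
  simp [pascalUpper]

def binomToeplitz (x : ℚ) (c n : ℕ) : Matrix (Fin n) (Fin n) ℚ :=
  of fun i j => gbinom x (((c + i : ℕ) : ℤ) - (j : ℕ))

lemma binomToeplitz_mul_pascalUpper (x : ℚ) (c n : ℕ) :
    binomToeplitz x c n * pascalUpper n =
      of fun (i j : Fin n) => gbinom (x + (j : ℕ)) (c + i : ℕ) := by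
  ext i j
  rw [mul_apply, of_apply, gbinom_add_natCast x _ j.isLt, ← Fin.sum_univ_eq_sum_range]
  rfl

lemma det_binomToeplitz_eq_det_gbinom_add (x : ℚ) (c n : ℕ) :
    (binomToeplitz x c n).det =
      (of fun (i j : Fin n) => gbinom (x + (j : ℕ)) (c + i : ℕ)).det := by
  rw [← binomToeplitz_mul_pascalUpper, det_mul, det_pascalUpper, mul_one]

lemma det_vandermonde_natCast (R : Type*) [CommRing R] (n : ℕ) :
    (vandermonde fun i : Fin n => (i : R)).det = ∏ i : Fin n, ((i : ℕ) ! : R) := by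
  rcases n with _ | n
  · simp
  · rw [det_vandermonde_id_eq_superFactorial, ← Nat.prod_range_succ_factorial,
      Fin.prod_univ_eq_prod_range (fun i => (i ! : R)), Nat.cast_prod]

lemma det_gbinom_add_natCast (y : ℚ) (c n : ℕ) :
    (of fun (i j : Fin n) => gbinom (y + (j : ℕ)) (c + i : ℕ)).det =
      ∏ j : Fin n, (∏ s ∈ range c, (y + (j : ℕ) - s)) * ((j : ℕ) ! : ℚ) / (c + j : ℕ)! := by
  set p : Fin n → ℚ[X] := fun i => ∏ s ∈ range i, (X - C ((c + s : ℕ) : ℚ))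
  have hp_deg : ∀ i, (p i).natDegree = i := fun i => by
    rw [natDegree_prod_of_monic _ _ fun s _ => monic_X_sub_C _]
    simp only [natDegree_X_sub_C, sum_const, card_range, smul_eq_mul, mul_one]
  have hp_monic : ∀ i, (p i).Monic := fun i => monic_prod_of_monic _ _ fun s _ => monic_X_sub_C _
  set V : Matrix (Fin n) (Fin n) ℚ := of fun a b => (p b).eval ((a : ℕ) + y)
  set A : Matrix (Fin n) (Fin n) ℚ := of fun i j => (∏ s ∈ range c, (y + (j : ℕ) - s)) * Vᵀ i j
  have hsplit : (of fun (i j : Fin n) => gbinom (y + (j : ℕ)) (c + i : ℕ)) =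
      of fun (i j : Fin n) => (((c + i : ℕ)! : ℚ))⁻¹ * A i j := by
    ext i j
    simp only [A, V, of_apply, transpose_apply, gbinom_natCast, prod_range_add, p, eval_prod,
      eval_sub, eval_X, eval_C]
    push_cast
    ring_nf
  rw [hsplit, det_mul_column, det_mul_row, det_transpose,
    ← det_eval_matrixOfPolynomials_eq_det_vandermonde _ _ hp_deg hp_monic,
    det_vandermonde_add (fun i : Fin n => ((i : ℕ) : ℚ)), det_vandermonde_natCast ℚ,
    ← prod_mul_distrib, ← prod_mul_distrib]
  refine prod_congr rfl fun j _ => ?_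
  ring

lemma poch_natCast (a : ℚ) (c : ℕ) : poch a c = ∏ m ∈ range c, (a + m) := by
  simp [poch]

lemma prod_range_sub_eq_poch (z : ℚ) (c : ℕ) : ∏ s ∈ range c, (z - s) = poch (z - c + 1) c := by
  rw [poch_natCast, ← prod_range_reflect]
  refine prod_congr rfl fun s hs => ?_
  have hsc := mem_range.1 hs
  rw [show c - 1 - s = c - (s + 1) by omega, Nat.cast_sub (by omega)]
  push_cast
  ring

lemma poch_natCast_add_one_mul_factorial (j c : ℕ) : poch ((j : ℚ) + 1) c * j ! = (j + c)! := by
  rw [poch_natCast]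
  norm_cast
  rw [← Nat.ascFactorial_eq_prod_range, mul_comm, Nat.factorial_mul_ascFactorial]

lemma det_binomToeplitz_eq_prod_poch (x : ℚ) (c n : ℕ) :
    (binomToeplitz (x + c) c n).det = ∏ i ∈ Icc 1 n, poch (x + i) c / poch i c := by
  rw [det_binomToeplitz_eq_det_gbinom_add, det_gbinom_add_natCast, Fin.prod_univ_eq_prod_range
    (fun j => (∏ s ∈ range c, (x + c + j - s)) * (j ! : ℚ) / (c + j : ℕ)!),
    ← Ico_add_one_right_eq_Icc, prod_Ico_eq_prod_range, add_tsub_cancel_right]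
  refine prod_congr rfl fun j _ => ?_
  rw [prod_range_sub_eq_poch, add_comm c j, ← poch_natCast_add_one_mul_factorial,
    mul_div_mul_right _ _ (by positivity)]
  push_cast
  ring_nf

lemma finRotate_pow_apply_val {m : ℕ} (k : ℕ) (i : Fin m) :
    ((finRotate m ^ k) i : ℕ) = (i + k) % m := by
  induction k with
  | zero => simp [Nat.mod_eq_of_lt i.isLt]
  | succ k ih =>
    have := i.neZero
    rw [pow_succ', Perm.mul_apply, finRotate_apply, Fin.val_add, ih, Fin.val_one', Nat.add_mod_mod,
      Nat.mod_add_mod, add_assoc]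

lemma sign_finRotate_pow (c n : ℕ) : Perm.sign (finRotate (c + n) ^ n) = (-1) ^ (c * n) := by
  rw [map_pow, sign_finRotate, ← pow_mul]
  rcases n with _ | n
  · simp
  · rw [show (c + (n + 1) - 1) * (n + 1) = c * (n + 1) + n * (n + 1) by
      rw [← add_assoc, Nat.add_sub_cancel]; ring, pow_add, (Nat.even_mul_succ_self n).neg_one_pow,
      mul_one]

lemma finRotate_pow_castAdd_val (c n : ℕ) (j : Fin c) :
    ((finRotate (c + n) ^ n) (Fin.castAdd n j) : ℕ) = j + n := by
  rw [finRotate_pow_apply_val, Fin.val_castAdd, Nat.mod_eq_of_lt (by omega)]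

lemma finRotate_pow_natAdd_val (c n : ℕ) (j : Fin n) :
    ((finRotate (c + n) ^ n) (Fin.natAdd c j) : ℕ) = j := by
  rw [finRotate_pow_apply_val, Fin.val_natAdd, show c + j + n = j + (c + n) by ring,
    Nat.add_mod_right, Nat.mod_eq_of_lt (by omega)]

lemma M'mat_submatrix_finRotate_eq_fromBlocks {x : ℚ} {c n : ℕ}
    (hx : 2 * x + ((c + n : ℕ) : ℚ) = 0) :
    (M'mat x (c + n) c).submatrix finSumFinEquiv (⇑(finRotate (c + n) ^ n) ∘ finSumFinEquiv) =
      fromBlocks (diagonal fun _ => 2)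
        (of fun (i : Fin c) (j : Fin n) => gbinom (x + c) ((i : ℕ) - (j : ℕ) : ℤ)) 0
        (binomToeplitz (x + c) c n) := by
  ext (i | i) (j | j) <;>
    simp only [submatrix_apply, Function.comp_apply, finSumFinEquiv_apply_left,
      finSumFinEquiv_apply_right, finRotate_pow_castAdd_val, finRotate_pow_natAdd_val,
      fromBlocks_apply₁₁, fromBlocks_apply₁₂, fromBlocks_apply₂₁, fromBlocks_apply₂₂, M'mat, hx,
      Fin.val_castAdd, Fin.val_natAdd, diagonal_apply, of_apply, binomToeplitz, Matrix.zero_apply]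
  · rw [if_neg (by omega), if_pos i.isLt, gbinom_zero_left, mul_ite, mul_one, mul_zero]
    exact if_congr (by rw [Fin.ext_iff]; omega) rfl rfl
  · rw [if_pos (by omega)]
    congr 1
    ring
  · rw [if_neg (by omega), if_neg (by omega), gbinom_zero_left, if_neg (by push_cast; omega)]
  · rw [if_pos (by omega)]
    push_cast
    ring_nf

lemma det_M'mat_of_two_mul_add_eq_zero {x : ℚ} {c n : ℕ} (hx : 2 * x + ((c + n : ℕ) : ℚ) = 0) :
    (M'mat x (c + n) c).det = (-1) ^ (c * n) * 2 ^ c * (binomToeplitz (x + c) c n).det := by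
  have hperm := det_permute' (finRotate (c + n) ^ n) (M'mat x (c + n) c)
  rw [← det_submatrix_equiv_self finSumFinEquiv, submatrix_submatrix, Function.id_comp,
    M'mat_submatrix_finRotate_eq_fromBlocks hx, det_fromBlocks_zero₂₁, det_diagonal, prod_const,
    card_univ, Fintype.card_fin, sign_finRotate_pow] at hperm
  push_cast at hperm
  rw [mul_assoc, hperm, ← mul_assoc, ← pow_add, ← two_mul, pow_mul, neg_one_sq, one_pow, one_mul]

theorem delta'_at_minus_half_b_general (b c : ℕ) (hcb : c ≤ b) :
    Δ'det (-(b : ℚ) / 2) b c =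
      (-1 : ℚ) ^ (c * (b - c)) * 2 ^ c *
        ∏ i ∈ Finset.Icc 1 (b - c),
          poch ((i : ℚ) - (b : ℚ) / 2) (c : ℤ) / poch (i : ℚ) (c : ℤ) := by
  obtain ⟨n, rfl⟩ := Nat.exists_eq_add_of_le hcb
  rw [Δ'det, det_M'mat_of_two_mul_add_eq_zero (by ring), det_binomToeplitz_eq_prod_poch,
    Nat.add_sub_cancel_left]
  refine congrArg _ (prod_congr rfl fun i _ => ?_)
  rw [neg_div, neg_add_eq_sub]

/-- The value of `Δ'(x;b,c)` at `x = -b/2` for odd `b` (expression (2.6)). -/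
theorem delta'_at_minus_half_b (b c : ℕ) (hcb : c ≤ b) (hb : Odd b) :
    Δ'det (-(b : ℚ) / 2) b c =
      (-1 : ℚ) ^ (c * (b - c)) * 2 ^ c *
        ∏ i ∈ Finset.Icc 1 (b - c),
          poch ((i : ℚ) - (b : ℚ) / 2) (c : ℤ) / poch (i : ℚ) (c : ℤ) :=
  delta'_at_minus_half_b_general b c hcb
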